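/- arXiv:1408.1056 — 2 statements merged into one kernel-verified Lean document; each statement's English description precedes it below -/
import Mathlib

section
/- There exists a universal constant C > 0 with the following property. Let f ∈ L^∞(ℝ) with f ≥ 0, and let θ : ℝ → ℝ be C¹, bounded, even, nonnegative, and nonincreasing on (0,∞), satisfying the stationary equation Hθ(x)·θ'(x) = f(x) for every x ∈ ℝ. Then |θ(x₁) − θ(x₂)| ≤ C·‖f‖_{L^∞}^{1/2}·|x₁ − x₂|^{1/2} for all x₁, x₂ ∈ ℝ; that is, θ is Hölder continuous of exponent 1/2. -/
/-!
For `x > 0` the truncated integrals converge (dominated convergence), so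
`Hθ(x) = (2x/π) ∫₀^∞ (θ y - θ x)/(y² - x²) dy`, and the integrand is nonpositive because `θ`
decreases on `(0, ∞)`. Keeping only `y ∈ (c, 2c)` gives `-Hθ(x) ≥ x (θ x - θ c) / (2π c)` for
`x ≤ c`. As `θ' ≤ 0`, the equation `Hθ · θ' = f` then yields
`-(d/dx) (θ x - θ c)² ≤ 8π f(x)` on `[b, c]` when `c ≤ 2b`, hence
`(θ b - θ c)² ≤ 8π ‖f‖∞ (c - b)`. Summing these bounds over the dyadic intervals
`[t/2ⁿ⁺¹, t/2ⁿ]` is a geometric series in `√t`, which extends the estimate to all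
`0 ≤ s ≤ t`; evenness then covers all of `ℝ`.
-/

open MeasureTheory Filter Set Topology

/-- Truncated integral in the principal value defining the Hilbert transform of an even
function: `Hθ(x) = (2x/π) p.v. ∫₀^∞ (θ(y)-θ(x))/(y²-x²) dy`. -/
noncomputable def hilbertEvenApprox (θ : ℝ → ℝ) (x ε : ℝ) : ℝ :=
  ∫ y in {y : ℝ | ε < y ∧ ε < |y - abs x|}, (θ y - θ x) / (y ^ 2 - x ^ 2)

/-- The Hilbert transform of an even function `θ`,
`Hθ(x) = (2x/π) p.v. ∫₀^∞ (θ(y)-θ(x))/(y²-x²) dy`. -/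
noncomputable def hilbertEven (θ : ℝ → ℝ) (x : ℝ) : ℝ :=
  (2 * x / Real.pi) * limUnder (𝓝[>] (0:ℝ)) (hilbertEvenApprox θ x)

open Real

section HilbertIntegral

variable {θ : ℝ → ℝ}

lemma integrableOn_Ioc_div_sq_sub_sq (hθ : ContDiff ℝ 1 θ) {x a : ℝ} (hx : 0 < x) (hxa : x ≤ a) :
    IntegrableOn (fun y => (θ y - θ x) / (y ^ 2 - x ^ 2)) (Ioc 0 a) := by
  obtain ⟨K, hK⟩ :=
    hθ.contDiffOn.exists_lipschitzOnWith one_ne_zero (convex_Icc 0 a) isCompact_Icc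
  have hθm := hθ.continuous.measurable
  refine Integrable.mono' (g := fun _ => K / x) (integrableOn_const measure_Ioc_lt_top.ne)
    (by fun_prop : Measurable _).aestronglyMeasurable ?_
  filter_upwards [ae_restrict_mem measurableSet_Ioc] with y hy
  rcases eq_or_ne y x with rfl | hyx
  · simp only [sub_self, zero_div, norm_zero]
    positivity
  have hlip : |θ y - θ x| ≤ K * |y - x| := by
    simpa only [Real.dist_eq] using hK.dist_le_mul y (Ioc_subset_Icc_self hy) x ⟨hx.le, hxa⟩
  have hyx' : 0 < |y - x| := abs_pos.2 (sub_ne_zero.2 hyx)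
  have hxy : 0 < y + x := by linarith [hy.1]
  rw [Real.norm_eq_abs, abs_div, show y ^ 2 - x ^ 2 = (y - x) * (y + x) by ring, abs_mul,
    abs_of_pos hxy, div_le_div_iff₀ (by positivity) hx]
  have hKy : 0 ≤ (K : ℝ) * |y - x| * y := by have := hy.1; positivity
  nlinarith [mul_le_mul_of_nonneg_right hlip hx.le]

lemma integrableOn_Ioi_div_sq_sub_sq (hθ : Measurable θ) {M : ℝ} (hM : ∀ z, |θ z| ≤ M)
    {x : ℝ} (hx : 0 < x) :
    IntegrableOn (fun y => (θ y - θ x) / (y ^ 2 - x ^ 2)) (Ioi (2 * x)) := by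
  refine Integrable.mono' ((integrableOn_Ioi_rpow_of_lt (by norm_num : (-2 : ℝ) < -1)
    (by linarith : 0 < 2 * x)).const_mul (8 * M / 3))
    (by fun_prop : Measurable _).aestronglyMeasurable ?_
  filter_upwards [ae_restrict_mem measurableSet_Ioi] with y (hy : 2 * x < y)
  have hy0 : 0 < y := by linarith
  have hnum : |θ y - θ x| ≤ 2 * M := (abs_sub _ _).trans (by linarith [hM x, hM y])
  have hden : 3 / 4 * y ^ 2 ≤ y ^ 2 - x ^ 2 := by nlinarith
  rw [Real.norm_eq_abs, abs_div, abs_of_pos (by nlinarith : 0 < y ^ 2 - x ^ 2),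
    Real.rpow_neg hy0.le, Real.rpow_two]
  calc |θ y - θ x| / (y ^ 2 - x ^ 2) ≤ 2 * M / (3 / 4 * y ^ 2) :=
        div_le_div₀ (by linarith [abs_nonneg (θ y - θ x)]) hnum (by positivity) hden
    _ = 8 * M / 3 * (y ^ 2)⁻¹ := by field_simp; ring

lemma integrableOn_Ioi_zero_div_sq_sub_sq (hθ : ContDiff ℝ 1 θ) {M : ℝ} (hM : ∀ z, |θ z| ≤ M)
    {x : ℝ} (hx : 0 < x) :
    IntegrableOn (fun y => (θ y - θ x) / (y ^ 2 - x ^ 2)) (Ioi 0) := by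
  rw [← Ioc_union_Ioi_eq_Ioi (by linarith : (0 : ℝ) ≤ 2 * x)]
  exact (integrableOn_Ioc_div_sq_sub_sq hθ hx (by linarith)).union
    (integrableOn_Ioi_div_sq_sub_sq hθ.continuous.measurable hM hx)

lemma tendsto_hilbertEvenApprox {x : ℝ}
    (hint : IntegrableOn (fun y => (θ y - θ x) / (y ^ 2 - x ^ 2)) (Ioi 0)) :
    Tendsto (hilbertEvenApprox θ x) (𝓝[>] 0)
      (𝓝 (∫ y in Ioi 0, (θ y - θ x) / (y ^ 2 - x ^ 2))) := by
  set g : ℝ → ℝ := fun y => (θ y - θ x) / (y ^ 2 - x ^ 2)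
  set S : ℝ → Set ℝ := fun ε => {y | ε < y ∧ ε < |y - abs x|}
  have hS : ∀ ε, MeasurableSet (S ε) := fun ε =>
    (measurableSet_lt measurable_const measurable_id).inter
      (measurableSet_lt measurable_const (measurable_id.sub_const _).abs)
  refine (tendsto_integral_filter_of_dominated_convergence (fun y => ‖g y‖)
    (Eventually.of_forall fun ε => hint.1.indicator (hS ε))
    (Eventually.of_forall fun ε => Eventually.of_forall fun y => norm_indicator_le_norm_self _ _)
    hint.norm ?_).congr' ?_
  · filter_upwards [ae_restrict_mem measurableSet_Ioi] with y (hy : 0 < y)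
    rcases eq_or_ne y |x| with rfl | hyx
    -- at `y = |x|` the integrand is `0 / 0 = 0` whatever `ε` is
    · simp [g, S, indicator_apply]
    · apply tendsto_const_nhds.congr'
      filter_upwards [Ioo_mem_nhdsGT (lt_min hy (abs_pos.2 (sub_ne_zero.2 hyx)))] with ε hε
      exact (indicator_of_mem (s := S ε) ⟨hε.2.trans_le (min_le_left _ _),
        hε.2.trans_le (min_le_right _ _)⟩ g).symm
  · filter_upwards [self_mem_nhdsWithin] with ε (hε : 0 < ε)
    rw [setIntegral_indicator (hS ε),
      inter_eq_right.2 (show S ε ⊆ Ioi 0 from fun y hy => hε.trans hy.1)]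
    rfl

lemma hilbertEven_eq_integral {x : ℝ}
    (hint : IntegrableOn (fun y => (θ y - θ x) / (y ^ 2 - x ^ 2)) (Ioi 0)) :
    hilbertEven θ x = 2 * x / π * ∫ y in Ioi 0, (θ y - θ x) / (y ^ 2 - x ^ 2) := by
  rw [hilbertEven, (tendsto_hilbertEvenApprox hint).limUnder_eq]

end HilbertIntegral

section Antitone

variable {θ : ℝ → ℝ}

lemma div_sq_sub_sq_nonpos (hanti : AntitoneOn θ (Ioi 0)) {x y : ℝ} (hx : 0 < x) (hy : 0 < y) :
    (θ y - θ x) / (y ^ 2 - x ^ 2) ≤ 0 := by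
  rcases le_total y x with hyx | hxy
  · exact div_nonpos_of_nonneg_of_nonpos (sub_nonneg.2 (hanti hy hx hyx))
      (sub_nonpos.2 (pow_le_pow_left₀ hy.le hyx 2))
  · exact div_nonpos_of_nonpos_of_nonneg (sub_nonpos.2 (hanti hx hy hxy))
      (sub_nonneg.2 (pow_le_pow_left₀ hx.le hxy 2))

lemma integral_div_sq_sub_sq_le (hanti : AntitoneOn θ (Ioi 0)) {x c : ℝ}
    (hint : IntegrableOn (fun y => (θ y - θ x) / (y ^ 2 - x ^ 2)) (Ioi 0))
    (hx : 0 < x) (hxc : x ≤ c) :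
    ∫ y in Ioi 0, (θ y - θ x) / (y ^ 2 - x ^ 2) ≤ -((θ x - θ c) / (4 * c)) := by
  have hc : 0 < c := hx.trans_le hxc
  have hIoo : Ioo c (2 * c) ⊆ Ioi 0 := fun y hy => hc.trans hy.1
  have houter : ∫ y in Ioo c (2 * c), -((θ y - θ x) / (y ^ 2 - x ^ 2))
      ≤ ∫ y in Ioi 0, -((θ y - θ x) / (y ^ 2 - x ^ 2)) :=
    setIntegral_mono_set hint.neg
      (ae_restrict_of_forall_mem measurableSet_Ioi fun y hy =>
        neg_nonneg.2 (div_sq_sub_sq_nonpos hanti hx hy))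
      hIoo.eventuallyLE
  have hinner : ∫ y in Ioo c (2 * c), (θ x - θ c) / (4 * c ^ 2)
      ≤ ∫ y in Ioo c (2 * c), -((θ y - θ x) / (y ^ 2 - x ^ 2)) := by
    refine setIntegral_mono_on (integrableOn_const measure_Ioo_lt_top.ne) (hint.neg.mono_set hIoo)
      measurableSet_Ioo fun y hy => ?_
    have hden : 0 < y ^ 2 - x ^ 2 := by nlinarith [hy.1]
    rw [← neg_div, neg_sub, div_le_div_iff₀ (by positivity) hden]
    have hA : 0 ≤ θ x - θ c := sub_nonneg.2 (hanti hx hc hxc)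
    have hθy : θ x - θ c ≤ θ x - θ y := by linarith [hanti hc (hIoo hy) hy.1.le]
    have hy4 : y ^ 2 - x ^ 2 ≤ 4 * c ^ 2 := by
      nlinarith [pow_lt_pow_left₀ hy.2 (hc.trans hy.1).le two_ne_zero]
    calc (θ x - θ c) * (y ^ 2 - x ^ 2) ≤ (θ x - θ c) * (4 * c ^ 2) :=
          mul_le_mul_of_nonneg_left hy4 hA
      _ ≤ (θ x - θ y) * (4 * c ^ 2) := by gcongr
  have hconst : ∫ y in Ioo c (2 * c), (θ x - θ c) / (4 * c ^ 2) = (θ x - θ c) / (4 * c) := by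
    rw [setIntegral_const, measureReal_def, Real.volume_Ioo, ENNReal.toReal_ofReal (by linarith),
      smul_eq_mul]
    field_simp
    ring
  simp only [integral_neg] at houter hinner
  linarith

lemma sub_mul_neg_deriv_le (hθ : ContDiff ℝ 1 θ) {M : ℝ} (hM : ∀ z, |θ z| ≤ M)
    (hanti : AntitoneOn θ (Ioi 0)) {b x c : ℝ} (hb : 0 < b) (hbx : b ≤ x) (hxc : x ≤ c)
    (hcb : c ≤ 2 * b) :
    (θ x - θ c) * -deriv θ x ≤ 4 * π * (hilbertEven θ x * deriv θ x) := by
  have hx : 0 < x := hb.trans_le hbx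
  have hint := integrableOn_Ioi_zero_div_sq_sub_sq hθ hM hx
  set I := ∫ y in Ioi 0, (θ y - θ x) / (y ^ 2 - x ^ 2)
  have hI : θ x - θ c ≤ 4 * c * -I := by
    have := integral_div_sq_sub_sq_le hanti hint hx hxc
    rw [le_neg, div_le_iff₀ (by linarith)] at this
    linarith
  have hI0 : 0 ≤ -I := neg_nonneg.2 <| setIntegral_nonpos measurableSet_Ioi fun y hy =>
    div_sq_sub_sq_nonpos hanti hx hy
  have hd : 0 ≤ -deriv θ x := by
    rw [neg_nonneg, ← derivWithin_of_isOpen isOpen_Ioi hx]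
    exact hanti.derivWithin_nonpos
  calc (θ x - θ c) * -deriv θ x ≤ 8 * x * -I * -deriv θ x :=
        mul_le_mul_of_nonneg_right (by nlinarith) hd
    _ = 4 * π * (hilbertEven θ x * deriv θ x) := by
        rw [hilbertEven_eq_integral hint]
        field_simp
        ring

end Antitone

lemma sub_le_mul_sub_of_neg_deriv_le_ae {F F' : ℝ → ℝ} {a b K : ℝ} (hab : a ≤ b)
    (hF : ∀ x ∈ Icc a b, HasDerivAt F (F' x) x) (hF' : IntervalIntegrable F' volume a b)
    (hK : ∀ᵐ x ∂volume.restrict (Icc a b), -F' x ≤ K) :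
    F a - F b ≤ K * (b - a) := by
  have hftc := intervalIntegral.integral_eq_sub_of_hasDerivAt (by rwa [uIcc_of_le hab]) hF'
  have := intervalIntegral.integral_mono_ae_restrict hab hF'.neg intervalIntegrable_const hK
  simp only [Pi.neg_apply, intervalIntegral.integral_neg, hftc, intervalIntegral.integral_const,
    smul_eq_mul] at this
  linarith

lemma MeasureTheory.MemLp.ae_norm_le_toReal_eLpNorm_top {α E : Type*} [MeasurableSpace α]
    {μ : Measure α} [NormedAddCommGroup E] {f : α → E} (hf : MemLp f ⊤ μ) :
    ∀ᵐ x ∂μ, ‖f x‖ ≤ (eLpNorm f ⊤ μ).toReal := by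
  filter_upwards [ae_le_eLpNormEssSup (f := f) (μ := μ)] with x hx
  rw [← eLpNorm_exponent_top] at hx
  simpa using ENNReal.toReal_mono hf.2.ne hx

lemma sub_le_sqrt_mul_sqrt_of_hilbertEven_mul_deriv_eq {θ f : ℝ → ℝ} (hf : MemLp f ⊤ volume)
    (hθ : ContDiff ℝ 1 θ) {M : ℝ} (hM : ∀ z, |θ z| ≤ M) (hanti : AntitoneOn θ (Ioi 0))
    (heq : ∀ x, hilbertEven θ x * deriv θ x = f x) {b c : ℝ} (hb : 0 < b) (hbc : b ≤ c)
    (hcb : c ≤ 2 * b) :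
    θ b - θ c ≤ √(8 * π * (eLpNorm f ⊤ volume).toReal) * √(c - b) := by
  set K := (eLpNorm f ⊤ volume).toReal
  have hderiv : ∀ x, HasDerivAt (fun z => (θ z - θ c) ^ 2) (2 * (θ x - θ c) * deriv θ x) x :=
    fun x => by
      simpa using (((hθ.differentiable one_ne_zero x).hasDerivAt).sub_const (θ c)).fun_pow 2
  have hbound : ∀ᵐ x ∂volume.restrict (Icc b c), -(2 * (θ x - θ c) * deriv θ x) ≤ 8 * π * K := by
    filter_upwards [ae_restrict_mem measurableSet_Icc,
      ae_restrict_of_ae hf.ae_norm_le_toReal_eLpNorm_top] with x hx hfx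
    have := sub_mul_neg_deriv_le hθ hM hanti hb hx.1 hx.2 hcb
    rw [heq] at this
    nlinarith [Real.le_norm_self (f x), pi_pos]
  have hcont : Continuous fun x => 2 * (θ x - θ c) * deriv θ x :=
    (continuous_const.mul (hθ.continuous.sub continuous_const)).mul (hθ.continuous_deriv le_rfl)
  have hsq := sub_le_mul_sub_of_neg_deriv_le_ae hbc (fun x _ => hderiv x)
    (hcont.intervalIntegrable b c) hbound
  rw [← Real.sqrt_mul (by positivity)]
  exact Real.le_sqrt_of_sq_le (by simpa using hsq)

section Doubling

variable {φ : ℝ → ℝ} {A : ℝ}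

lemma sub_le_of_sub_le_on_doubling_dyadic (hA0 : 0 ≤ A)
    (hA : ∀ b c, 0 < b → b ≤ c → c ≤ 2 * b → φ b - φ c ≤ A * √(c - b)) {t : ℝ} (ht : 0 < t)
    (n : ℕ) :
    φ (t / 2 ^ n) - φ t ≤ 3 * A * (√t - √(t / 2 ^ n)) := by
  induction n with
  | zero => simp
  | succ n ih =>
    set u := t / 2 ^ (n + 1)
    have hu : 0 < u := by positivity
    have h2u : t / 2 ^ n = 2 * u := by simp only [u, pow_succ]; field_simp
    rw [h2u, Real.sqrt_mul zero_le_two] at ih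
    have hstep := hA u (2 * u) hu (by linarith) le_rfl
    rw [show 2 * u - u = u by ring] at hstep
    -- `3 (√2 - 1) ≥ 1` is what makes the geometric sum close up
    have hsqrt2 : 4 / 3 ≤ √2 := Real.le_sqrt_of_sq_le (by norm_num)
    nlinarith [mul_nonneg hA0 (Real.sqrt_nonneg u)]

lemma sub_le_of_sub_le_on_doubling (hφ : AntitoneOn φ (Ioi 0)) (hA0 : 0 ≤ A)
    (hA : ∀ b c, 0 < b → b ≤ c → c ≤ 2 * b → φ b - φ c ≤ A * √(c - b)) {s t : ℝ} (hs : 0 < s)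
    (hst : s ≤ t) :
    φ s - φ t ≤ 5 * A * √(t - s) := by
  have hAst : 0 ≤ A * √(t - s) := mul_nonneg hA0 (Real.sqrt_nonneg _)
  rcases le_or_gt t (2 * s) with hts | hts
  · linarith [hA s t hs hst hts]
  have ht : 0 < t := hs.trans_le hst
  obtain ⟨n, hn⟩ := pow_unbounded_of_one_lt (t / s) one_lt_two
  have hns : t / 2 ^ n ≤ s := by
    rw [div_lt_iff₀ hs] at hn
    rw [div_le_iff₀ (by positivity)]
    linarith
  have hdyadic := sub_le_of_sub_le_on_doubling_dyadic hA0 hA ht n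
  have hsqrt : √t ≤ √2 * √(t - s) := by
    rw [← Real.sqrt_mul zero_le_two]
    exact Real.sqrt_le_sqrt (by linarith)
  have hsqrt2 : √2 ≤ 3 / 2 := Real.sqrt_le_iff.2 ⟨by norm_num, by norm_num⟩
  nlinarith [hφ (show 0 < t / 2 ^ n by positivity) hs hns, Real.sqrt_nonneg (t / 2 ^ n),
    mul_le_mul_of_nonneg_left hsqrt hA0, mul_nonneg hA0 (Real.sqrt_nonneg 2)]

lemma abs_sub_le_of_sub_le_on_doubling (hφ : AntitoneOn φ (Ioi 0))
    (hφ0 : ContinuousWithinAt φ (Ioi 0) 0) (hA0 : 0 ≤ A)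
    (hA : ∀ b c, 0 < b → b ≤ c → c ≤ 2 * b → φ b - φ c ≤ A * √(c - b)) {s t : ℝ} (hs : 0 ≤ s)
    (ht : 0 ≤ t) :
    |φ s - φ t| ≤ 5 * A * √|s - t| := by
  wlog hst : s ≤ t generalizing s t
  · rw [abs_sub_comm, abs_sub_comm s]
    exact this ht hs (le_of_not_ge hst)
  rw [abs_sub_comm s t, abs_of_nonneg (sub_nonneg.2 hst)]
  have hpos : ∀ u ∈ Ioc 0 t, |φ u - φ t| ≤ 5 * A * √(t - u) := fun u hu => by
    rw [abs_of_nonneg (sub_nonneg.2 (hφ hu.1 (hu.1.trans_le hu.2) hu.2))]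
    exact sub_le_of_sub_le_on_doubling hφ hA0 hA hu.1 hu.2
  rcases hs.eq_or_lt with rfl | hs
  · rcases ht.eq_or_lt with rfl | ht
    · simp
    refine ContinuousWithinAt.closure_le (by rw [closure_Ioc ht.ne]; exact ⟨le_rfl, ht.le⟩)
      ((hφ0.mono Ioc_subset_Ioi_self).sub continuousWithinAt_const).abs
      (by fun_prop : Continuous fun u => 5 * A * √(t - u)).continuousWithinAt hpos
  · exact hpos s ⟨hs, hst⟩

end Doubling

/-- Theorem: there is a universal constant `C > 0` such that any `C¹`, bounded, even,
nonnegative function `θ`, nonincreasing on `(0,∞)`, solving the stationary equation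
`Hθ(x) · θ'(x) = f(x)` for every `x`, with `0 ≤ f ∈ L^∞(ℝ)`, satisfies
`|θ(x₁) - θ(x₂)| ≤ C ‖f‖_{L^∞}^{1/2} |x₁-x₂|^{1/2}` for all `x₁, x₂`. -/
theorem stmt_6 :
    ∃ C : ℝ, 0 < C ∧
      ∀ f θ : ℝ → ℝ,
        MemLp f ⊤ volume → (∀ x : ℝ, 0 ≤ f x) →
        ContDiff ℝ 1 θ →
        (∃ M : ℝ, ∀ x : ℝ, |θ x| ≤ M) →
        (∀ x : ℝ, θ (-x) = θ x) →
        (∀ x : ℝ, 0 ≤ θ x) →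
        AntitoneOn θ (Set.Ioi 0) →
        (∀ x : ℝ, hilbertEven θ x * deriv θ x = f x) →
        ∀ x₁ x₂ : ℝ,
          |θ x₁ - θ x₂| ≤
            C * Real.sqrt (eLpNorm f ⊤ volume).toReal * Real.sqrt |x₁ - x₂| := by
  refine ⟨30, by norm_num, ?_⟩
  intro f θ hf _ hθ ⟨M, hM⟩ heven _ hanti heq x₁ x₂
  set K := (eLpNorm f ⊤ volume).toReal
  have hθabs : ∀ x, θ |x| = θ x := fun x => by
    rcases abs_choice x with h | h <;> simp [h, heven]
  have hholder := abs_sub_le_of_sub_le_on_doubling hanti hθ.continuous.continuousWithinAt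
    (Real.sqrt_nonneg _)
    (fun _ _ hb hbc hcb =>
      sub_le_sqrt_mul_sqrt_of_hilbertEven_mul_deriv_eq hf hθ hM hanti heq hb hbc hcb)
    (abs_nonneg x₁) (abs_nonneg x₂)
  rw [hθabs, hθabs] at hholder
  have h8π : √(8 * π * K) ≤ 6 * √K := by
    rw [Real.sqrt_mul (by positivity)]
    gcongr
    exact Real.sqrt_le_iff.2 ⟨by norm_num, by nlinarith [pi_lt_four]⟩
  calc |θ x₁ - θ x₂| ≤ 5 * √(8 * π * K) * √(abs (|x₁| - |x₂|)) := hholder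
    _ ≤ 5 * (6 * √K) * √|x₁ - x₂| := by
        gcongr 5 * ?_ * √?_
        exact abs_abs_sub_abs_le_abs_sub x₁ x₂
    _ = 30 * √K * √|x₁ - x₂| := by ring
end

section
/- Let θ : ℝ → ℝ be continuous, bounded, even, and nonincreasing on [0,∞), and let 0 < x₂ < x₁. Then the integrand in the formula Hθ(x₂) = (2x₂/π)·∫₀^∞ (θ(y)−θ(x₂))/(y²−x₂²) dy is nonpositive, and −Hθ(x₂) ≥ (1/π)·log((x₁+x₂)/(x₁−x₂))·(θ(x₂)−θ(x₁)) ≥ 0. -/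
open MeasureTheory Filter Set Topology

/-!
Below `x₂` the numerator `θ y - θ x₂` is `≥ 0` and the denominator `< 0`, above `x₂` the signs
are reversed, so the integrand of `Hθ(x₂)` is nonpositive. For the quantitative bound, discard
`(0, x₁]` and use `θ x₂ - θ y ≥ θ x₂ - θ x₁` for `y > x₁`; what remains is
`(θ x₂ - θ x₁) ∫_{x₁}^∞ dy / (y² - x₂²)`, and the antiderivative
`(log (y - x₂) - log (y + x₂)) / (2 x₂)` evaluates this integral to
`log ((x₁ + x₂) / (x₁ - x₂)) / (2 x₂)`.
-/

open Real

lemma div_sq_sub_sq_nonpos_of_antitoneOn {θ : ℝ → ℝ} (hθ : AntitoneOn θ (Ici 0)) {x y : ℝ}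
    (hx : 0 ≤ x) (hy : 0 ≤ y) : (θ y - θ x) / (y ^ 2 - x ^ 2) ≤ 0 := by
  rcases le_total x y with hxy | hyx
  · exact div_nonpos_of_nonpos_of_nonneg (sub_nonpos.mpr (hθ hx hy hxy))
      (sub_nonneg.mpr (pow_le_pow_left₀ hx hxy 2))
  · exact div_nonpos_of_nonneg_of_nonpos (sub_nonneg.mpr (hθ hy hx hyx))
      (sub_nonpos.mpr (pow_le_pow_left₀ hy hyx 2))

section InverseSqSubSq

variable {a b : ℝ}

lemma hasDerivAt_log_sub_sub_log_add (ha : 0 < a) {y : ℝ} (hy : a < y) :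
    HasDerivAt (fun y => (log (y - a) - log (y + a)) / (2 * a)) (1 / (y ^ 2 - a ^ 2)) y := by
  have hsub : y - a ≠ 0 := by linarith
  have hadd : y + a ≠ 0 := by linarith
  refine ((((hasDerivAt_id' y).sub_const a).log hsub).sub
    (((hasDerivAt_id' y).add_const a).log hadd)).div_const (2 * a) |>.congr_deriv ?_
  rw [show y ^ 2 - a ^ 2 = (y - a) * (y + a) by ring]
  field_simp
  ring

lemma tendsto_log_sub_sub_log_add_atTop (a : ℝ) :
    Tendsto (fun y => log (y - a) - log (y + a)) atTop (𝓝 0) := by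
  have hratio : Tendsto (fun y => 1 - 2 * a / (y + a)) atTop (𝓝 1) := by
    simpa using tendsto_const_nhds.sub
      (tendsto_const_nhds.div_atTop (tendsto_atTop_add_const_right atTop a tendsto_id))
  have hlog := (continuousAt_log one_ne_zero).tendsto.comp hratio
  rw [log_one] at hlog
  refine hlog.congr' ?_
  filter_upwards [eventually_gt_atTop |a|] with y hy
  have hsub : 0 < y - a := by linarith [le_abs_self a]
  have hadd : 0 < y + a := by linarith [neg_abs_le a]
  rw [Function.comp_apply, ← log_div hsub.ne' hadd.ne']
  congr 1
  field_simp
  ring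

lemma lintegral_Ioi_one_div_sq_sub_sq (ha : 0 < a) (hab : a < b) :
    ∫⁻ y in Ioi b, ENNReal.ofReal (1 / (y ^ 2 - a ^ 2)) =
      ENNReal.ofReal (log ((b + a) / (b - a)) / (2 * a)) := by
  have hderiv (y : ℝ) (hy : y ∈ Ici b) := hasDerivAt_log_sub_sub_log_add ha (hab.trans_le hy)
  have hpos (y : ℝ) (hy : y ∈ Ioi b) : 0 ≤ 1 / (y ^ 2 - a ^ 2) := by
    have : a ^ 2 < y ^ 2 := pow_lt_pow_left₀ (hab.trans hy) ha.le two_ne_zero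
    exact one_div_nonneg.mpr (sub_nonneg.mpr this.le)
  have hlim := (tendsto_log_sub_sub_log_add_atTop a).div_const (2 * a)
  rw [zero_div] at hlim
  rw [← ofReal_integral_eq_lintegral_ofReal (integrableOn_Ioi_deriv_of_nonneg' hderiv hpos hlim)
      ((ae_restrict_mem measurableSet_Ioi).mono hpos),
    integral_Ioi_of_hasDerivAt_of_nonneg' hderiv hpos hlim,
    log_div (by linarith) (by linarith)]
  congr 1
  ring

end InverseSqSubSq

lemma ofReal_mul_ofReal_log_div_le_lintegral {θ : ℝ → ℝ} (hθ : AntitoneOn θ (Ici 0)) {a b : ℝ}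
    (ha : 0 < a) (hab : a < b) :
    ENNReal.ofReal (θ a - θ b) * ENNReal.ofReal (log ((b + a) / (b - a)) / (2 * a)) ≤
      ∫⁻ y in Ioi 0, ENNReal.ofReal ((θ a - θ y) / (y ^ 2 - a ^ 2)) := by
  have hb : 0 ≤ b := ha.le.trans hab.le
  have htail (y : ℝ) (hy : y ∈ Ioi b) : ENNReal.ofReal (θ a - θ b) *
      ENNReal.ofReal (1 / (y ^ 2 - a ^ 2)) ≤ ENNReal.ofReal ((θ a - θ y) / (y ^ 2 - a ^ 2)) := by
    have hsq : a ^ 2 < y ^ 2 := pow_lt_pow_left₀ (hab.trans hy) ha.le two_ne_zero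
    rw [← ENNReal.ofReal_mul (sub_nonneg.mpr (hθ ha.le hb hab.le)), mul_one_div]
    exact ENNReal.ofReal_le_ofReal (div_le_div_of_nonneg_right
      (by linarith [hθ hb (hb.trans hy.out.le) hy.out.le]) (by linarith))
  calc ENNReal.ofReal (θ a - θ b) * ENNReal.ofReal (log ((b + a) / (b - a)) / (2 * a))
      = ∫⁻ y in Ioi b, ENNReal.ofReal (θ a - θ b) * ENNReal.ofReal (1 / (y ^ 2 - a ^ 2)) := by
        rw [lintegral_const_mul' _ _ ENNReal.ofReal_ne_top, lintegral_Ioi_one_div_sq_sub_sq ha hab]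
    _ ≤ ∫⁻ y in Ioi b, ENNReal.ofReal ((θ a - θ y) / (y ^ 2 - a ^ 2)) :=
        setLIntegral_mono' measurableSet_Ioi htail
    _ ≤ _ := lintegral_mono_set (Ioi_subset_Ioi hb)

theorem stmt_12_general (θ : ℝ → ℝ)
    (hmono : AntitoneOn θ (Set.Ici 0))
    (x₁ x₂ : ℝ) (hx₂ : 0 < x₂) (hx₁ : x₂ < x₁) :
    (∀ y : ℝ, 0 < y → (θ y - θ x₂) / (y ^ 2 - x₂ ^ 2) ≤ 0) ∧
    0 ≤ (1 / Real.pi) * Real.log ((x₁ + x₂) / (x₁ - x₂)) * (θ x₂ - θ x₁) ∧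
    ENNReal.ofReal ((1 / Real.pi) * Real.log ((x₁ + x₂) / (x₁ - x₂)) * (θ x₂ - θ x₁))
      ≤ ENNReal.ofReal (2 * x₂ / Real.pi) *
          ∫⁻ y in Set.Ioi (0:ℝ), ENNReal.ofReal ((θ x₂ - θ y) / (y ^ 2 - x₂ ^ 2)) := by
  have hdrop : 0 ≤ θ x₂ - θ x₁ := sub_nonneg.mpr (hmono hx₂.le (hx₂.le.trans hx₁.le) hx₁.le)
  have hlog : 0 ≤ log ((x₁ + x₂) / (x₁ - x₂)) :=
    log_nonneg ((le_div_iff₀ (by linarith)).mpr (by linarith))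
  refine ⟨fun y hy => div_sq_sub_sq_nonpos_of_antitoneOn hmono hx₂.le hy.le,
    mul_nonneg (mul_nonneg (by positivity) hlog) hdrop, ?_⟩
  calc ENNReal.ofReal ((1 / π) * log ((x₁ + x₂) / (x₁ - x₂)) * (θ x₂ - θ x₁))
      = ENNReal.ofReal (2 * x₂ / π) * (ENNReal.ofReal (θ x₂ - θ x₁) *
          ENNReal.ofReal (log ((x₁ + x₂) / (x₁ - x₂)) / (2 * x₂))) := by
        rw [← ENNReal.ofReal_mul hdrop, ← ENNReal.ofReal_mul (by positivity)]
        congr 1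
        field_simp
    _ ≤ _ := mul_le_mul_right (ofReal_mul_ofReal_log_div_le_lintegral hmono hx₂ hx₁) _

/-- Theorem: for a continuous, bounded, even function `θ` nonincreasing on `[0,∞)` and
`0 < x₂ < x₁`: the integrand in `Hθ(x₂) = (2x₂/π)∫₀^∞ (θ(y)-θ(x₂))/(y²-x₂²) dy` is
nonpositive, and `-Hθ(x₂) ≥ (1/π)·log((x₁+x₂)/(x₁-x₂))·(θ(x₂)-θ(x₁)) ≥ 0`.  Here
`-Hθ(x₂) = (2x₂/π)·∫₀^∞ (θ(x₂)-θ(y))/(y²-x₂²) dy` is interpreted as a well-defined value in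
`[0,∞]`, via the Lebesgue integral of the nonnegative integrand. -/
theorem stmt_12 (θ : ℝ → ℝ)
    (hcont : Continuous θ)
    (hbdd : ∃ M : ℝ, ∀ x : ℝ, |θ x| ≤ M)
    (heven : ∀ x : ℝ, θ (-x) = θ x)
    (hmono : AntitoneOn θ (Set.Ici 0))
    (x₁ x₂ : ℝ) (hx₂ : 0 < x₂) (hx₁ : x₂ < x₁) :
    (∀ y : ℝ, 0 < y → (θ y - θ x₂) / (y ^ 2 - x₂ ^ 2) ≤ 0) ∧
    0 ≤ (1 / Real.pi) * Real.log ((x₁ + x₂) / (x₁ - x₂)) * (θ x₂ - θ x₁) ∧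
    ENNReal.ofReal ((1 / Real.pi) * Real.log ((x₁ + x₂) / (x₁ - x₂)) * (θ x₂ - θ x₁))
      ≤ ENNReal.ofReal (2 * x₂ / Real.pi) *
          ∫⁻ y in Set.Ioi (0:ℝ), ENNReal.ofReal ((θ x₂ - θ y) / (y ^ 2 - x₂ ^ 2)) :=
  stmt_12_general θ hmono x₁ x₂ hx₂ hx₁
end
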